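/- arXiv:1905.00555 — 3 statements merged into one kernel-verified Lean document; each statement's English description precedes it below -/
import Mathlib

section
/- For every fixed offset w ∈ ℝ, along the line y = x + w one has: lim_{x→∞} π_E(x, x + w) = 1 (equivalently lim_{x→∞} R(x, x + w) = 0), lim_{x→∞} Ψ(x, x + w) = 0, and there exist constants C > 0 and x₀ ∈ ℝ such that |Ψ(x, x + w)| ≤ C·e^(−x) for all x ≥ x₀; i.e., the flux decays exponentially as both binding free energies diverge at fixed offset. -/
open Real Filter

/-
Whatever the catalytic rates, the balance equations at ES and EP give `b·π_ES ≤ a + d` and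
`f·π_EP ≤ c + g`. Along `y = x + w` the unbinding rates `b = k₀eˣ` and `f = k₁eˣ⁺ʷ` grow like
`eˣ` while `a, c, d, g` stay bounded, so `R = π_ES + π_EP = O(e⁻ˣ)`. The balance at ES also
rewrites the flux as `c·π_ES − d·π_EP`, which is bounded by `(c + d)·R`.
-/

/-- A probability vector `(pE, pES, pEP)` is a stationary distribution of the
three-state cycle chain with rates `a,b,c,d,f,g` if its entries are nonnegative,
sum to 1, and satisfy the global balance equations. -/
def IsStat (a b c d f g pE pES pEP : ℝ) : Prop :=
  0 ≤ pE ∧ 0 ≤ pES ∧ 0 ≤ pEP ∧ pE + pES + pEP = 1 ∧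
  (a + g) * pE = b * pES + f * pEP ∧
  (b + c) * pES = a * pE + d * pEP ∧
  (d + f) * pEP = c * pES + g * pE

namespace IsStat

variable {a b c d f g pE pES pEP : ℝ}

theorem pE_eq (h : IsStat a b c d f g pE pES pEP) : pE = 1 - (pES + pEP) := by
  linarith [h.2.2.2.1]

theorem pES_le (h : IsStat a b c d f g pE pES pEP) (ha : 0 ≤ a) (hb : 0 < b) (hc : 0 ≤ c)
    (hd : 0 ≤ d) : pES ≤ (a + d) / b := by
  obtain ⟨hE, hES, hEP, hsum, -, hbalES, -⟩ := h
  rw [le_div_iff₀ hb]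
  nlinarith [mul_le_of_le_one_right ha (by linarith : pE ≤ 1),
    mul_le_of_le_one_right hd (by linarith : pEP ≤ 1)]

theorem pEP_le (h : IsStat a b c d f g pE pES pEP) (hc : 0 ≤ c) (hd : 0 ≤ d) (hf : 0 < f)
    (hg : 0 ≤ g) : pEP ≤ (c + g) / f := by
  obtain ⟨hE, hES, hEP, hsum, -, -, hbalEP⟩ := h
  rw [le_div_iff₀ hf]
  nlinarith [mul_le_of_le_one_right hc (by linarith : pES ≤ 1),
    mul_le_of_le_one_right hg (by linarith : pE ≤ 1)]

theorem flux_eq (h : IsStat a b c d f g pE pES pEP) : a * pE - b * pES = c * pES - d * pEP := by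
  linarith [h.2.2.2.2.2.1]

theorem abs_flux_le (h : IsStat a b c d f g pE pES pEP) (hc : 0 ≤ c) (hd : 0 ≤ d) :
    |a * pE - b * pES| ≤ (c + d) * (pES + pEP) := by
  rw [h.flux_eq, abs_le]
  constructor <;> nlinarith [h.2.1, h.2.2.1]

theorem add_le_mul_exp_neg {k0 k1 cmax dmax x w : ℝ}
    (h : IsStat a (k0 * exp x) c d (k1 * exp (x + w)) g pE pES pEP)
    (hk0 : 0 < k0) (hk1 : 0 < k1) (ha : 0 ≤ a) (hg : 0 ≤ g)
    (hc : 0 ≤ c) (hcmax : c ≤ cmax) (hd : 0 ≤ d) (hdmax : d ≤ dmax) :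
    pES + pEP ≤ ((a + dmax) / k0 + (cmax + g) / (k1 * exp w)) * exp (-x) := by
  have hES := h.pES_le ha (by positivity) hc hd
  have hEP := h.pEP_le hc hd (by positivity) hg
  calc pES + pEP ≤ (a + d) / (k0 * exp x) + (c + g) / (k1 * exp (x + w)) := add_le_add hES hEP
    _ ≤ (a + dmax) / (k0 * exp x) + (cmax + g) / (k1 * exp (x + w)) := by gcongr
    _ = ((a + dmax) / k0 + (cmax + g) / (k1 * exp w)) * exp (-x) := by
      rw [exp_add, exp_neg]
      field_simp

end IsStat

theorem mul_min_one_exp_le {k : ℝ} (hk : 0 ≤ k) (t : ℝ) : k * min 1 (exp t) ≤ k :=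
  mul_le_of_le_one_right hk (min_le_left _ _)

/-- Along any line `y = x + w`, as `x → ∞` the enzyme becomes free
(`π_E → 1`, `R → 0`), the flux tends to zero, and the flux decays at least
exponentially: `|Ψ(x, x+w)| ≤ C·e^(−x)` eventually. -/
theorem stmt_11
    (k0 k1 kcat S P dmu dGc : ℝ)
    (hk0 : 0 < k0) (hk1 : 0 < k1) (hkcat : 0 < kcat) (hS : 0 < S) (hP : 0 < P)
    (pE pES pEP R Psi : ℝ → ℝ → ℝ)
    (hstat : ∀ x y : ℝ,
      IsStat (k0 * S) (k0 * exp x)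
        (kcat * min 1 (exp (x - y + dmu + dGc)))
        (kcat * exp dGc * min 1 (exp (y - x - dmu - dGc)))
        (k1 * exp y) (k1 * P)
        (pE x y) (pES x y) (pEP x y))
    (hR : ∀ x y : ℝ, R x y = pES x y + pEP x y)
    (hPsi : ∀ x y : ℝ, Psi x y = k0 * S * pE x y - k0 * exp x * pES x y)
    (w : ℝ) :
    Tendsto (fun x : ℝ => pE x (x + w)) atTop (nhds 1) ∧
    Tendsto (fun x : ℝ => R x (x + w)) atTop (nhds 0) ∧
    Tendsto (fun x : ℝ => Psi x (x + w)) atTop (nhds 0) ∧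
    ∃ C : ℝ, 0 < C ∧ ∃ x₀ : ℝ, ∀ x : ℝ, x₀ ≤ x → |Psi x (x + w)| ≤ C * exp (-x) := by
  set K := (k0 * S + kcat * exp dGc) / k0 + (kcat + k1 * P) / (k1 * exp w)
  set M := kcat + kcat * exp dGc
  have hR_nonneg (x : ℝ) : 0 ≤ R x (x + w) := by
    rw [hR]; exact add_nonneg (hstat x _).2.1 (hstat x _).2.2.1
  have hR_le (x : ℝ) : R x (x + w) ≤ K * exp (-x) := by
    rw [hR]
    exact (hstat x _).add_le_mul_exp_neg hk0 hk1 (by positivity) (by positivity) (by positivity)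
      (mul_min_one_exp_le hkcat.le _) (by positivity) (mul_min_one_exp_le (by positivity) _)
  have hPsi_le (x : ℝ) : |Psi x (x + w)| ≤ M * R x (x + w) := by
    rw [hPsi, hR]
    refine ((hstat x _).abs_flux_le (by positivity) (by positivity)).trans ?_
    gcongr
    · exact add_nonneg (hstat x _).2.1 (hstat x _).2.2.1
    · exact add_le_add (mul_min_one_exp_le hkcat.le _) (mul_min_one_exp_le (by positivity) _)
  have hR_lim : Tendsto (fun x => R x (x + w)) atTop (nhds 0) :=
    squeeze_zero hR_nonneg hR_le (by simpa using tendsto_exp_neg_atTop_nhds_zero.const_mul K)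
  have hPsi_lim : Tendsto (fun x => Psi x (x + w)) atTop (nhds 0) :=
    squeeze_zero_norm hPsi_le (by simpa using hR_lim.const_mul M)
  have hpE_eq : (fun x => pE x (x + w)) = fun x => 1 - R x (x + w) := by
    funext x; rw [hR]; exact (hstat x _).pE_eq
  refine ⟨?_, hR_lim, hPsi_lim, M * K, by positivity, 0, fun x _ => ?_⟩
  · rw [hpE_eq]; simpa using hR_lim.const_sub 1
  · calc |Psi x (x + w)| ≤ M * R x (x + w) := hPsi_le x
      _ ≤ M * (K * exp (-x)) := by gcongr; exact hR_le x
      _ = M * K * exp (-x) := by ring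
end

section
/- In the non-diffusion-controlled three-state enzyme model, for every (x,y) ∈ ℝ² and every δ > 0, the sequestered fraction strictly decreases when both binding free energies are increased by δ: R(x + δ, y + δ) < R(x, y). -/
/-!
The stationary law follows from the Markov chain tree theorem: with
`T = b d + b f + c f` (spanning trees rooted at `E`) and `N = a (c + d + f) + g (b + c + d)`
(those rooted at `ES` or `EP`), `π_E = T / (T + N)`. Writing `a = α b` and `g = γ f` with
`α = S e^{-x}` and `γ = P e^{-y}`, a common shift by `δ` leaves `c, d` unchanged, multiplies
`α, γ` by `q = e^{-δ} < 1`, and raises `b, f` by a factor in `[1, 1/q]`. Each of the two terms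
`α · b (c + d + f) / T` and `γ · f (b + c + d) / T` of `N / T` then strictly decreases,
so `π_E` increases and `R = 1 - π_E` decreases.
-/

open Real Filter

def treeWeight (b c d f : ℝ) : ℝ := b * d + b * f + c * f

lemma treeWeight_comm (b c d f : ℝ) : treeWeight b c d f = treeWeight f d c b := by
  unfold treeWeight; ring

lemma IsStat.pE_mul_eq {a b c d f g pE pES pEP : ℝ} (h : IsStat a b c d f g pE pES pEP) :
    pE * (treeWeight b c d f + (a * (c + d + f) + g * (b + c + d))) = treeWeight b c d f := by
  obtain ⟨-, -, -, hsum, hE, hES, -⟩ := h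
  unfold treeWeight
  linear_combination (b + c + d) * hE + (b - f) * hES + (b * d + b * f + c * f) * hsum

/-- Cross-multiplied form of `q · u(b', f') < u(b, f)` for `u(b, f) = b (c + d + f) / T`:
`u` is antitone in `f`, and scaling `b` by `t ≥ 1` scales `u` by at most `t ≤ 1/q`. -/
lemma treeWeight_shift_lt {q b c d f b' f' : ℝ} (hq : q < 1) (hb : 0 < b) (hc : 0 ≤ c)
    (hd : 0 ≤ d) (hf : 0 < f) (hbb' : b ≤ b') (hqb' : q * b' ≤ b) (hff' : f ≤ f') :
    q * (b' * (c + d + f')) * treeWeight b c d f <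
      b * (c + d + f) * treeWeight b' c d f' := by
  unfold treeWeight
  have hb' : 0 < b' := hb.trans_le hbb'
  have h_scale : q * b' * (b * d + b * f + c * f) < b * (b' * d + b' * f + c * f) := by
    have : q * (b' * b * (d + f)) < b' * b * (d + f) :=
      mul_lt_of_lt_one_left (by positivity) hq
    nlinarith [mul_le_mul_of_nonneg_right hqb' (by positivity : 0 ≤ c * f)]
  have h_anti : (c + d + f') * (b' * d + b' * f + c * f) ≤
      (c + d + f) * (b' * d + b' * f' + c * f') := by
    nlinarith [mul_nonneg (sub_nonneg.2 hff') (by positivity : 0 ≤ c * b' + c * (c + d))]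
  calc q * (b' * (c + d + f')) * (b * d + b * f + c * f)
      = (c + d + f') * (q * b' * (b * d + b * f + c * f)) := by ring
    _ < (c + d + f') * (b * (b' * d + b' * f + c * f)) :=
        mul_lt_mul_of_pos_left h_scale (by linarith)
    _ = b * ((c + d + f') * (b' * d + b' * f + c * f)) := by ring
    _ ≤ b * ((c + d + f) * (b' * d + b' * f' + c * f')) :=
        mul_le_mul_of_nonneg_left h_anti hb.le
    _ = b * (c + d + f) * (b' * d + b' * f' + c * f') := by ring

lemma IsStat.sequestered_lt_of_shift {α γ q b c d f b' f' pE pES pEP pE' pES' pEP' : ℝ}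
    (hα : 0 < α) (hγ : 0 < γ) (hq0 : 0 < q) (hq : q < 1) (hb : 0 < b) (hc : 0 ≤ c) (hd : 0 ≤ d)
    (hf : 0 < f) (hbb' : b ≤ b') (hqb' : q * b' ≤ b) (hff' : f ≤ f') (hqf' : q * f' ≤ f)
    (h : IsStat (α * b) b c d f (γ * f) pE pES pEP)
    (h' : IsStat (q * α * b') b' c d f' (q * γ * f') pE' pES' pEP') :
    pES' + pEP' < pES + pEP := by
  have hb' : 0 < b' := hb.trans_le hbb'
  have hf' : 0 < f' := hf.trans_le hff'
  have hT : 0 < treeWeight b c d f := by unfold treeWeight; positivity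
  have hT' : 0 < treeWeight b' c d f' := by unfold treeWeight; positivity
  have hES := treeWeight_shift_lt hq hb hc hd hf hbb' hqb' hff'
  have hEP := treeWeight_shift_lt hq hf hd hc hb hff' hqf' hbb'
  rw [← treeWeight_comm b c d f, ← treeWeight_comm b' c d f'] at hEP
  have hN : (q * α * b' * (c + d + f') + q * γ * f' * (b' + c + d)) * treeWeight b c d f <
      (α * b * (c + d + f) + γ * f * (b + c + d)) * treeWeight b' c d f' := by
    linarith [mul_lt_mul_of_pos_left hES hα, mul_lt_mul_of_pos_left hEP hγ]
  have hpE := h.pE_mul_eq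
  have hpE' := h'.pE_mul_eq
  have hpE_lt : pE < pE' := by
    have hTN : 0 < treeWeight b c d f + (α * b * (c + d + f) + γ * f * (b + c + d)) :=
      add_pos hT (by positivity)
    have hTN' : 0 < treeWeight b' c d f' +
        (q * α * b' * (c + d + f') + q * γ * f' * (b' + c + d)) :=
      add_pos hT' (by positivity)
    rw [← eq_div_iff hTN.ne'] at hpE
    rw [← eq_div_iff hTN'.ne'] at hpE'
    rw [hpE, hpE', div_lt_div_iff₀ hTN hTN']
    linarith
  obtain ⟨-, -, -, hsum, -⟩ := h
  obtain ⟨-, -, -, hsum', -⟩ := h'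
  linarith

lemma min_one_exp_neg (t : ℝ) : min 1 (exp (-t)) = exp (-t) * min 1 (exp t) := by
  rw [mul_min_of_nonneg _ _ (exp_pos _).le, mul_one, ← exp_add, neg_add_cancel, exp_zero,
    min_comm]

lemma binding_rate_eq (k A E x : ℝ) :
    k * A * min 1 (exp (-(x - E))) = A * exp (-x) * (k * exp E * min 1 (exp (x - E))) := by
  rw [min_one_exp_neg, show -(x - E) = -x + E by ring, exp_add]
  ring

lemma unbinding_rate_le (k E x δ : ℝ) (hk : 0 ≤ k) (hδ : 0 ≤ δ) :
    k * exp E * min 1 (exp (x - E)) ≤ k * exp E * min 1 (exp (x + δ - E)) :=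
  mul_le_mul_of_nonneg_left (min_le_min_left _ (exp_le_exp.2 (by linarith))) (by positivity)

lemma exp_neg_mul_unbinding_rate_le (k E x δ : ℝ) (hk : 0 ≤ k) (hδ : 0 ≤ δ) :
    exp (-δ) * (k * exp E * min 1 (exp (x + δ - E))) ≤ k * exp E * min 1 (exp (x - E)) := by
  have hmin : exp (-δ) * min 1 (exp (x + δ - E)) ≤ min 1 (exp (x - E)) := by
    rw [mul_min_of_nonneg _ _ (exp_pos _).le, mul_one, ← exp_add,
      show -δ + (x + δ - E) = x - E by ring]
    exact min_le_min_right _ (exp_le_one_iff.2 (by linarith))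
  calc exp (-δ) * (k * exp E * min 1 (exp (x + δ - E)))
      = k * exp E * (exp (-δ) * min 1 (exp (x + δ - E))) := by ring
    _ ≤ k * exp E * min 1 (exp (x - E)) := mul_le_mul_of_nonneg_left hmin (by positivity)

theorem stmt_15_general
    (k0 k1 kcat S P dmu dGc E1 E2 : ℝ)
    (hk0 : 0 < k0) (hk1 : 0 < k1) (hkcat : 0 < kcat) (hS : 0 < S) (hP : 0 < P)
    (pE pES pEP R : ℝ → ℝ → ℝ)
    (hstat : ∀ x y : ℝ,
      IsStat (k0 * S * min 1 (exp (-(x - E1)))) (k0 * exp E1 * min 1 (exp (x - E1)))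
        (kcat * min 1 (exp (x - y + dmu + dGc)))
        (kcat * exp dGc * min 1 (exp (y - x - dmu - dGc)))
        (k1 * exp E2 * min 1 (exp (y - E2))) (k1 * P * min 1 (exp (-(y - E2))))
        (pE x y) (pES x y) (pEP x y))
    (hR : ∀ x y : ℝ, R x y = pES x y + pEP x y)
    : ∀ x y δ : ℝ, 0 < δ → R (x + δ) (y + δ) < R x y := by
  intro x y δ hδ
  have hshift (A z : ℝ) : A * exp (-(z + δ)) = exp (-δ) * (A * exp (-z)) := by
    rw [neg_add, exp_add]; ring
  have hst := hstat x y
  have hst' := hstat (x + δ) (y + δ)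
  rw [binding_rate_eq, binding_rate_eq] at hst hst'
  rw [hshift, hshift, show x + δ - (y + δ) = x - y by ring,
    show y + δ - (x + δ) = y - x by ring] at hst'
  rw [hR, hR]
  exact hst.sequestered_lt_of_shift (by positivity) (by positivity) (exp_pos _)
    (exp_lt_one_iff.2 (by linarith)) (by positivity) (by positivity) (by positivity) (by positivity)
    (unbinding_rate_le _ _ _ _ hk0.le hδ.le) (exp_neg_mul_unbinding_rate_le _ _ _ _ hk0.le hδ.le)
    (unbinding_rate_le _ _ _ _ hk1.le hδ.le) (exp_neg_mul_unbinding_rate_le _ _ _ _ hk1.le hδ.le)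
    hst'

/-- Non-diffusion-controlled model: increasing both binding free energies by
the same `δ > 0` strictly decreases the sequestered fraction. -/
theorem stmt_15
    (k0 k1 kcat S P dmu dGc E1 E2 : ℝ)
    (hk0 : 0 < k0) (hk1 : 0 < k1) (hkcat : 0 < kcat) (hS : 0 < S) (hP : 0 < P)
    (pE pES pEP R Psi : ℝ → ℝ → ℝ)
    (hstat : ∀ x y : ℝ,
      IsStat (k0 * S * min 1 (exp (-(x - E1)))) (k0 * exp E1 * min 1 (exp (x - E1)))
        (kcat * min 1 (exp (x - y + dmu + dGc)))
        (kcat * exp dGc * min 1 (exp (y - x - dmu - dGc)))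
        (k1 * exp E2 * min 1 (exp (y - E2))) (k1 * P * min 1 (exp (-(y - E2))))
        (pE x y) (pES x y) (pEP x y))
    (hR : ∀ x y : ℝ, R x y = pES x y + pEP x y)
    (hPsi : ∀ x y : ℝ, Psi x y =
      k0 * S * min 1 (exp (-(x - E1))) * pE x y -
        k0 * exp E1 * min 1 (exp (x - E1)) * pES x y)
    : ∀ x y δ : ℝ, 0 < δ → R (x + δ) (y + δ) < R x y :=
  stmt_15_general k0 k1 kcat S P dmu dGc E1 E2 hk0 hk1 hkcat hS hP pE pES pEP R hstat hR
end

section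
/- (The flux constraint is saturated, non-diffusion model.) Suppose Ψ₀ > 0 and the feasible set F = {(x,y) ∈ ℝ² : Ψ(x,y) ≥ Ψ₀} is nonempty. If (x*, y*) ∈ F minimizes R over F, then Ψ(x*, y*) = Ψ₀. -/
/-!
Shifting both binding free energies by the same `t > 0` leaves the catalytic rates unchanged,
multiplies the binding rates `a`, `g` by factors `r, m ≤ 1` and the unbinding rates `b`, `f`
by `r eᵗ, m eᵗ ≥ 1`. In Kirchhoff's formula for the stationary distribution this strictly
increases the free fraction `π_E`, i.e. strictly decreases `R`. A minimizer with slack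
`Ψ > Ψ₀` would stay feasible under a small such shift, since `Ψ` is continuous, contradicting
minimality.
-/

open Real Filter

/-- Kirchhoff spanning-tree weights of the cycle `E ⇄ ES ⇄ EP ⇄ E`: the stationary
distribution is proportional to `(treeWeightE, treeWeightES, treeWeightEP)`. -/
def treeWeightE (_a b c d f _g : ℝ) : ℝ := b * d + b * f + c * f

def treeWeightES (a _b _c d f g : ℝ) : ℝ := a * d + a * f + d * g

def treeWeightEP (a b c _d _f g : ℝ) : ℝ := a * c + c * g + b * g

section Cycle

variable {a b c d f g p q s : ℝ}
variable (ha : 0 < a) (hb : 0 < b) (hc : 0 < c) (hd : 0 < d) (hf : 0 < f) (hg : 0 < g)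
include ha hb hc hd hf hg

theorem IsStat.pE_eq_s19 (h : IsStat a b c d f g p q s) :
    p = treeWeightE a b c d f g /
      (treeWeightE a b c d f g + treeWeightES a b c d f g + treeWeightEP a b c d f g) := by
  obtain ⟨-, -, -, hsum, -, hES, hEP⟩ := h
  unfold treeWeightE treeWeightES treeWeightEP
  rw [eq_div_iff (by positivity)]
  linear_combination (b * d + b * f + c * f) * hsum - (d + f + c) * hES - (b + c + d) * hEP

theorem IsStat.pES_eq (h : IsStat a b c d f g p q s) :
    q = treeWeightES a b c d f g /
      (treeWeightE a b c d f g + treeWeightES a b c d f g + treeWeightEP a b c d f g) := by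
  obtain ⟨-, -, -, hsum, -, hES, hEP⟩ := h
  unfold treeWeightE treeWeightES treeWeightEP
  rw [eq_div_iff (by positivity)]
  linear_combination (a * d + a * f + d * g) * hsum + (d + f + g) * hES + (d - a) * hEP

theorem IsStat.flux_eq_s19 (h : IsStat a b c d f g p q s) :
    a * p - b * q = (a * c * f - b * d * g) /
      (treeWeightE a b c d f g + treeWeightES a b c d f g + treeWeightEP a b c d f g) := by
  rw [h.pE_eq_s19 ha hb hc hd hf hg, h.pES_eq ha hb hc hd hf hg]
  unfold treeWeightE treeWeightES
  ring

theorem treeWeight_rescale_lt {r m E : ℝ} (hr : r ≤ 1) (hm : m ≤ 1) (hrE : 1 ≤ r * E)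
    (hmE : 1 ≤ m * E) (hE : 1 < E) :
    (treeWeightES (r * a) (r * E * b) c d (m * E * f) (m * g) +
        treeWeightEP (r * a) (r * E * b) c d (m * E * f) (m * g)) * treeWeightE a b c d f g <
      (treeWeightES a b c d f g + treeWeightEP a b c d f g) *
        treeWeightE (r * a) (r * E * b) c d (m * E * f) (m * g) := by
  unfold treeWeightE treeWeightES treeWeightEP
  have hE0 : 0 < E := by linarith
  have hr0 : 0 < r := by nlinarith
  have hm0 : 0 < m := by nlinarith
  -- Every rescaled tree weight of `ES` and `EP` is at most `r m E` times the old one, every one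
  -- of `E` at least `r m E` times, strictly for the tree `ES → E ← EP`.
  have hbound : r * a * d + r * a * (m * E * f) + d * (m * g) +
        (r * a * c + c * (m * g) + r * E * b * (m * g)) ≤
      r * m * E * (a * d + a * f + d * g + (a * c + c * g + b * g)) := by
    linarith [mul_nonneg (mul_nonneg (mul_nonneg ha.le hd.le) hr0.le) (sub_nonneg.2 hmE),
      mul_nonneg (mul_nonneg (mul_nonneg hd.le hg.le) hm0.le) (sub_nonneg.2 hrE),
      mul_nonneg (mul_nonneg (mul_nonneg ha.le hc.le) hr0.le) (sub_nonneg.2 hmE),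
      mul_nonneg (mul_nonneg (mul_nonneg hc.le hg.le) hm0.le) (sub_nonneg.2 hrE)]
  have hgrowth : r * m * E * (b * d + b * f + c * f) <
      r * E * b * d + r * E * b * (m * E * f) + c * (m * E * f) := by
    linarith [mul_nonneg (mul_nonneg (mul_nonneg (mul_nonneg hb.le hd.le) hr0.le) hE0.le)
        (sub_nonneg.2 hm),
      mul_pos (mul_pos (mul_pos (mul_pos (mul_pos hb hf) hr0) hm0) hE0) (sub_pos.2 hE),
      mul_nonneg (mul_nonneg (mul_nonneg (mul_nonneg hc.le hf.le) hm0.le) hE0.le)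
        (sub_nonneg.2 hr)]
  calc _ ≤ r * m * E * (a * d + a * f + d * g + (a * c + c * g + b * g)) *
          (b * d + b * f + c * f) := mul_le_mul_of_nonneg_right hbound (by positivity)
    _ = (a * d + a * f + d * g + (a * c + c * g + b * g)) *
          (r * m * E * (b * d + b * f + c * f)) := by ring
    _ < _ := mul_lt_mul_of_pos_left hgrowth (by positivity)

theorem IsStat.pE_lt_of_rescale {a' b' c' d' f' g' p' q' s' r m E : ℝ}
    (h : IsStat a b c d f g p q s) (h' : IsStat a' b' c' d' f' g' p' q' s')
    (ha' : a' = r * a) (hb' : b' = r * E * b) (hc' : c' = c) (hd' : d' = d)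
    (hf' : f' = m * E * f) (hg' : g' = m * g)
    (hr : r ≤ 1) (hm : m ≤ 1) (hrE : 1 ≤ r * E) (hmE : 1 ≤ m * E) (hE : 1 < E) :
    p < p' := by
  subst ha' hb' hc' hd' hf' hg'
  have hr0 : 0 < r := by nlinarith
  have hm0 : 0 < m := by nlinarith
  have hE0 : 0 < E := by linarith
  rw [h.pE_eq_s19 ha hb hc hd hf hg, h'.pE_eq_s19 (by positivity) (by positivity) hc hd (by positivity)
    (by positivity), div_lt_div_iff₀ (by unfold treeWeightE treeWeightES treeWeightEP; positivity)
    (by unfold treeWeightE treeWeightES treeWeightEP; positivity)]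
  linarith [treeWeight_rescale_lt ha hb hc hd hf hg hr hm hrE hmE hE]

end Cycle

theorem exists_min_one_exp_add {t : ℝ} (u : ℝ) (ht : 0 ≤ t) : ∃ r ≤ 1, 1 ≤ r * exp t ∧
    min 1 (exp (-(u + t))) = r * min 1 (exp (-u)) ∧
    min 1 (exp (u + t)) = r * exp t * min 1 (exp u) := by
  have hmin (v : ℝ) : min 1 (exp v) = exp (min 0 v) := by
    rw [exp_monotone.map_min, exp_zero]
  refine ⟨exp (min 0 (-(u + t)) - min 0 (-u)), ?_, ?_, ?_, ?_⟩
  · exact exp_le_one_iff.2 (sub_nonpos.2 (min_le_min le_rfl (by linarith)))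
  · rw [← exp_add, one_le_exp_iff]
    rcases le_total 0 (-(u + t)) with h | h <;> rcases le_total 0 (-u) with h' | h' <;>
      simp only [min_eq_left, min_eq_right, h, h'] <;> linarith
  · rw [hmin, hmin, ← exp_add, sub_add_cancel]
  · rw [hmin, hmin, ← exp_add, ← exp_add]
    congr 1
    rcases le_total 0 (u + t) with h | h <;> rcases le_total 0 u with h' | h' <;>
      simp only [min_eq_left, min_eq_right, h, h', neg_nonpos.2, neg_nonneg.2] <;> linarith

theorem IsMinOn.eq_of_continuousWithinAt_Ioi {R Ψ : ℝ → ℝ} {c : ℝ}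
    (hmin : IsMinOn R {t | c ≤ Ψ t} 0) (hfeas : c ≤ Ψ 0)
    (hΨ : ContinuousWithinAt Ψ (Set.Ioi 0) 0) (hR : ∀ t > 0, R t < R 0) : Ψ 0 = c := by
  refine hfeas.antisymm' (not_lt.1 fun hlt => ?_)
  obtain ⟨t, hct, ht⟩ :=
    ((hΨ.eventually (eventually_gt_nhds hlt)).and self_mem_nhdsWithin).exists
  exact (hR t ht).not_ge (hmin (show c ≤ Ψ t from hct.le))

theorem stmt_19_general
    (k0 k1 kcat S P dmu dGc E1 E2 : ℝ)
    (hk0 : 0 < k0) (hk1 : 0 < k1) (hkcat : 0 < kcat) (hS : 0 < S) (hP : 0 < P)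
    (pE pES pEP R Psi : ℝ → ℝ → ℝ)
    (hstat : ∀ x y : ℝ,
      IsStat (k0 * S * min 1 (exp (-(x - E1)))) (k0 * exp E1 * min 1 (exp (x - E1)))
        (kcat * min 1 (exp (x - y + dmu + dGc)))
        (kcat * exp dGc * min 1 (exp (y - x - dmu - dGc)))
        (k1 * exp E2 * min 1 (exp (y - E2))) (k1 * P * min 1 (exp (-(y - E2))))
        (pE x y) (pES x y) (pEP x y))
    (hR : ∀ x y : ℝ, R x y = pES x y + pEP x y)
    (hPsi : ∀ x y : ℝ, Psi x y =
      k0 * S * min 1 (exp (-(x - E1))) * pE x y -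
        k0 * exp E1 * min 1 (exp (x - E1)) * pES x y)
    (Psi0 : ℝ)
    (xs ys : ℝ)
    (hfeas : Psi0 ≤ Psi xs ys)
    (hmin : ∀ x y : ℝ, Psi0 ≤ Psi x y → R xs ys ≤ R x y) :
    Psi xs ys = Psi0 := by
  have hflux := fun x y => (hPsi x y).trans ((hstat x y).flux_eq_s19 (by positivity) (by positivity)
    (by positivity) (by positivity) (by positivity) (by positivity))
  have hR' (x y : ℝ) : R x y = 1 - pE x y := by
    linarith [hR x y, (hstat x y).2.2.2.1]
  suffices h : Psi (xs + 0) (ys + 0) = Psi0 by simpa using h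
  refine IsMinOn.eq_of_continuousWithinAt_Ioi (R := fun t => R (xs + t) (ys + t))
    (Ψ := fun t => Psi (xs + t) (ys + t)) (fun t ht => by simpa using hmin _ _ ht)
    (by simpa using hfeas) ?_ fun t ht => ?_
  · simp only [hflux, treeWeightE, treeWeightES, treeWeightEP]
    refine ContinuousAt.continuousWithinAt ?_
    fun_prop (disch := positivity)
  · obtain ⟨r, hr, hrE, hra, hrb⟩ := exists_min_one_exp_add (xs - E1) ht.le
    obtain ⟨m, hm, hmE, hmg, hmf⟩ := exists_min_one_exp_add (ys - E2) ht.le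
    simp only [hR', add_zero, sub_lt_sub_iff_left]
    refine (hstat xs ys).pE_lt_of_rescale (by positivity) (by positivity) (by positivity)
      (by positivity) (by positivity) (by positivity) (hstat (xs + t) (ys + t))
      ?_ ?_ ?_ ?_ ?_ ?_ hr hm hrE hmE (one_lt_exp_iff.2 ht)
    · rw [add_sub_right_comm, hra]; ring
    · rw [add_sub_right_comm, hrb]; ring
    · ring_nf
    · ring_nf
    · rw [add_sub_right_comm, hmf]; ring
    · rw [add_sub_right_comm, hmg]; ring

/-- Non-diffusion model: the flux constraint is saturated. Any minimizer of the
sequestered fraction over the nonempty feasible set `{Ψ ≥ Ψ₀}` satisfies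
`Ψ(x*,y*) = Ψ₀`. -/
theorem stmt_19
    (k0 k1 kcat S P dmu dGc E1 E2 : ℝ)
    (hk0 : 0 < k0) (hk1 : 0 < k1) (hkcat : 0 < kcat) (hS : 0 < S) (hP : 0 < P)
    (pE pES pEP R Psi : ℝ → ℝ → ℝ)
    (hstat : ∀ x y : ℝ,
      IsStat (k0 * S * min 1 (exp (-(x - E1)))) (k0 * exp E1 * min 1 (exp (x - E1)))
        (kcat * min 1 (exp (x - y + dmu + dGc)))
        (kcat * exp dGc * min 1 (exp (y - x - dmu - dGc)))
        (k1 * exp E2 * min 1 (exp (y - E2))) (k1 * P * min 1 (exp (-(y - E2))))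
        (pE x y) (pES x y) (pEP x y))
    (hR : ∀ x y : ℝ, R x y = pES x y + pEP x y)
    (hPsi : ∀ x y : ℝ, Psi x y =
      k0 * S * min 1 (exp (-(x - E1))) * pE x y -
        k0 * exp E1 * min 1 (exp (x - E1)) * pES x y)
    (Psi0 : ℝ) (hPsi0 : 0 < Psi0)
    (hne : ∃ q : ℝ × ℝ, Psi0 ≤ Psi q.1 q.2)
    (xs ys : ℝ)
    (hfeas : Psi0 ≤ Psi xs ys)
    (hmin : ∀ x y : ℝ, Psi0 ≤ Psi x y → R xs ys ≤ R x y) :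
    Psi xs ys = Psi0 :=
  stmt_19_general k0 k1 kcat S P dmu dGc E1 E2 hk0 hk1 hkcat hS hP pE pES pEP R Psi hstat hR hPsi
    Psi0 xs ys hfeas hmin
end
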